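/- arXiv:2205.03466 — 2 statements merged into one kernel-verified Lean document; each statement's English description precedes it below -/
import Mathlib

section
/- Let N+ be a rooted binary phylogenetic network on taxon set X. Every m-blob of N+ with m ≥ 3 that lies below the LSA of N+ is determined by some 3-element subset of X; moreover, if the blob containing the LSA is an m-blob with m ≥ 4, it too is determined by some 3-element subset of X. -/
/-!
# Common framework

Finite directed multigraphs, undirected connectivity, numbers of connected
components, cut edges, subgraphs, blobs, blobs determined by leaf sets,
B-quartets, and quartets displayed via cut-edge separation.

A *network* is modelled as a finite directed multigraph (edge directions are
simply ignored for the undirected notions of connectivity, cut edges and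
blobs).
-/

/-- A finite directed multigraph: finite types of nodes and of edges, with
source and target maps. -/
structure MDigraph where
  V : Type
  E : Type
  finV : Finite V
  finE : Finite E
  src : E → V
  tgt : E → V

attribute [instance] MDigraph.finV MDigraph.finE

namespace MDigraph

section Basic

variable (G : MDigraph)

/-- One undirected step between `u` and `v` along an edge from the set `F`. -/
def Step (F : Set G.E) (u v : G.V) : Prop :=
  ∃ e ∈ F, (G.src e = u ∧ G.tgt e = v) ∨ (G.src e = v ∧ G.tgt e = u)

/-- Undirected reachability (an undirected path) using only edges in `F`. -/
def Conn (F : Set G.E) (u v : G.V) : Prop :=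
  Relation.ReflTransGen (G.Step F) u v

/-- One directed step from `u` to `v` along an edge from the set `F`. -/
def DStep (F : Set G.E) (u v : G.V) : Prop :=
  ∃ e ∈ F, G.src e = u ∧ G.tgt e = v

/-- Directed reachability (a directed path) using only edges in `F`. -/
def DConn (F : Set G.E) (u v : G.V) : Prop :=
  Relation.ReflTransGen (G.DStep F) u v

/-- `u` is above (ancestral to) `v`: there is a directed path from `u` to `v`. -/
def Above (u v : G.V) : Prop := G.DConn Set.univ u v

/-- In-degree of a node. -/
noncomputable def inDeg (v : G.V) : ℕ := Nat.card {e : G.E // G.tgt e = v}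

/-- Out-degree of a node. -/
noncomputable def outDeg (v : G.V) : ℕ := Nat.card {e : G.E // G.src e = v}

/-- Undirected degree of a node (a loop counts twice). -/
noncomputable def degree (v : G.V) : ℕ := G.inDeg v + G.outDeg v

/-- The number of connected components of the graph with node set `W` and edge
set the restriction to `W` of `F` (two nodes of `W` lie in the same connected
component iff they are joined by an undirected path). -/
noncomputable def numComponents (W : Set G.V) (F : Set G.E) : ℕ :=
  Nat.card (Quot (fun u v : W => G.Step {e ∈ F | G.src e ∈ W ∧ G.tgt e ∈ W} u.1 v.1))

/-- `v` lies on every directed path from `u` to `w`: there is no directed path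
from `u` to `w` all of whose nodes avoid `v`. -/
def OnEveryPath (v u w : G.V) : Prop :=
  ¬ (u ≠ v ∧ w ≠ v ∧
      Relation.ReflTransGen (fun a b => G.DStep Set.univ a b ∧ a ≠ v ∧ b ≠ v) u w)

end Basic

/-- A subgraph (subnetwork): a set of nodes together with a set of edges
joining them. -/
structure Subgraph (G : MDigraph) where
  verts : Set G.V
  edges : Set G.E
  src_mem : ∀ e ∈ edges, G.src e ∈ verts
  tgt_mem : ∀ e ∈ edges, G.tgt e ∈ verts

/-- The whole graph, as a subgraph of itself. -/
def top (G : MDigraph) : Subgraph G :=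
  ⟨Set.univ, Set.univ, fun _ _ => Set.mem_univ _, fun _ _ => Set.mem_univ _⟩

namespace Subgraph

variable {G : MDigraph}

/-- Containment of subgraphs. -/
def le (H K : Subgraph G) : Prop := H.verts ⊆ K.verts ∧ H.edges ⊆ K.edges

/-- The subgraph `H` is connected. -/
def IsConnected (H : Subgraph G) : Prop :=
  H.verts.Nonempty ∧ ∀ u ∈ H.verts, ∀ v ∈ H.verts, G.Conn H.edges u v

/-- Delete an edge from a subgraph. -/
def deleteEdge (H : Subgraph G) (e : G.E) : Subgraph G :=
  ⟨H.verts, H.edges \ {e}, fun e' he' => H.src_mem e' he'.1,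
    fun e' he' => H.tgt_mem e' he'.1⟩

/-- The number of connected components of a subgraph. -/
noncomputable def numComponents (H : Subgraph G) : ℕ :=
  G.numComponents H.verts H.edges

/-- `e` is a cut edge of the (sub)graph `H`: deleting it increases the number
of connected components. -/
def IsCutEdge (H : Subgraph G) (e : G.E) : Prop :=
  e ∈ H.edges ∧ H.numComponents < (H.deleteEdge e).numComponents

end Subgraph

variable {G : MDigraph}

/-- `B` is a blob of the network `H`: a maximal connected subnetwork of `H`
having no cut edges.  (A blob is *trivial* if it consists of a single node.) -/
def IsBlobIn (H B : Subgraph G) : Prop :=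
  B.le H ∧ B.IsConnected ∧ (∀ e, ¬ B.IsCutEdge e) ∧
    ∀ B' : Subgraph G, B'.le H → B'.IsConnected → (∀ e, ¬ B'.IsCutEdge e) →
      B.le B' → B'.le B

/-- `e` is a cut edge of the network `H` incident to the blob `B`: exactly one
of its endpoints is a node of `B`. -/
def IncidentCut (H B : Subgraph G) (e : G.E) : Prop :=
  H.IsCutEdge e ∧ Xor' (G.src e ∈ B.verts) (G.tgt e ∈ B.verts)

/-- The blob `B` of the network `H` is determined by the set `S` of leaf
labels: deletion of the cut edges of `H` incident to `B` leaves the nodes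
labelled by the elements of `S` in distinct connected components. -/
def DeterminesIn {X : Type} (H B : Subgraph G) (leaf : X → G.V) (S : Set X) : Prop :=
  ∀ s ∈ S, ∀ t ∈ S, s ≠ t →
    ¬ G.Conn {e ∈ H.edges | ¬ IncidentCut H B e} (leaf s) (leaf t)

/-- Four taxa form a B-quartet on the network `H`: some blob of `H` is
determined by them. -/
def BQuartetIn {X : Type} (H : Subgraph G) (leaf : X → G.V) (a b c d : X) : Prop :=
  ∃ B : Subgraph G, IsBlobIn H B ∧ DeterminesIn H B leaf ({a, b, c, d} : Set X)

/-- Some cut edge of `H` separates the taxa `p, q` from the taxa `r, s`: after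
its deletion `p, q` lie in one connected component and `r, s` in another.  For
a 4-taxon set `{p,q,r,s}` this says exactly that the (reduced unrooted) tree of
blobs of `H` displays the resolved quartet `pq|rs` (the edges of the tree of
blobs correspond exactly to the cut edges of the network, and suppressing
degree-2 nodes or contracting blobs does not affect which taxa a cut edge
separates). -/
def CutSep {X : Type} (H : Subgraph G) (leaf : X → G.V) (p q r s : X) : Prop :=
  ∃ e, H.IsCutEdge e ∧
    G.Conn (H.edges \ {e}) (leaf p) (leaf q) ∧
    G.Conn (H.edges \ {e}) (leaf r) (leaf s) ∧
    ¬ G.Conn (H.edges \ {e}) (leaf p) (leaf r)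

end MDigraph
open MDigraph in
/-- A rooted binary phylogenetic network on the taxon set `X`: a connected
directed acyclic graph whose node set consists of a root (in-degree 0,
out-degree 2), leaves (in-degree 1, out-degree 0) bijectively labelled by `X`,
tree nodes (in-degree 1, out-degree 2) and hybrid nodes (in-degree 2,
out-degree 1). -/
structure PhyloNetwork (X : Type) extends MDigraph where
  root : toMDigraph.V
  leaf : X → toMDigraph.V
  leaf_inj : Function.Injective leaf
  root_in : toMDigraph.inDeg root = 0
  root_out : toMDigraph.outDeg root = 2
  leaf_in : ∀ x, toMDigraph.inDeg (leaf x) = 1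
  leaf_out : ∀ x, toMDigraph.outDeg (leaf x) = 0
  internal : ∀ v, v ≠ root → (∀ x, v ≠ leaf x) →
      (toMDigraph.inDeg v = 1 ∧ toMDigraph.outDeg v = 2) ∨
      (toMDigraph.inDeg v = 2 ∧ toMDigraph.outDeg v = 1)
  acyclic : ∀ v, ¬ Relation.TransGen (toMDigraph.DStep Set.univ) v v
  conn : ∀ u v, toMDigraph.Conn Set.univ u v

namespace PhyloNetwork

open MDigraph

variable {X : Type} (N : PhyloNetwork X)

/-- The subnetwork of `N⁺` consisting of all nodes and edges ancestral to at
least one taxon in `Y`.  Since suppressing nodes of in- and out-degree 1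
affects neither blobs, nor cut edges, nor which sets of taxa they separate,
this subnetwork faithfully represents the induced network `N⁺_Y`. -/
def inducedSub (Y : Set X) : Subgraph N.toMDigraph where
  verts := {v | ∃ y ∈ Y, N.toMDigraph.Above v (N.leaf y)}
  edges := {e | ∃ y ∈ Y, N.toMDigraph.Above (N.toMDigraph.tgt e) (N.leaf y)}
  src_mem := by
    rintro e ⟨y, hy, h⟩
    exact ⟨y, hy, Relation.ReflTransGen.head ⟨e, Set.mem_univ e, rfl, rfl⟩ h⟩
  tgt_mem := by
    rintro e ⟨y, hy, h⟩
    exact ⟨y, hy, h⟩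

/-- `v` is a stable ancestor of the leaves: it is ancestral to every leaf and
lies on every directed path from the root to any leaf. -/
def IsStableAncestor (v : N.toMDigraph.V) : Prop :=
  (∀ x, N.toMDigraph.Above v (N.leaf x)) ∧
  ∀ x, N.toMDigraph.OnEveryPath v N.root (N.leaf x)

/-- `v` is the lowest stable ancestor (LSA) of the network: a stable ancestor
below all stable ancestors. -/
def IsLSA (v : N.toMDigraph.V) : Prop :=
  N.IsStableAncestor v ∧ ∀ u, N.IsStableAncestor u → N.toMDigraph.Above u v

/-- The number of cut edges of `N⁺` incident to the blob `B`. -/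
noncomputable def blobDeg (B : Subgraph N.toMDigraph) : ℕ :=
  Nat.card {e : N.toMDigraph.E // IncidentCut (top N.toMDigraph) B e}

/-- `B` is an `m`-blob of the rooted network `N⁺`: if the root is not in `B`
then `B` has exactly `m` incident cut edges, while if the root is in `B` then
`B` has exactly `m - 1` incident cut edges. -/
def IsMBlob (B : Subgraph N.toMDigraph) (m : ℕ) : Prop :=
  IsBlobIn (top N.toMDigraph) B ∧
    ((N.root ∈ B.verts ∧ m = N.blobDeg B + 1) ∨ (N.root ∉ B.verts ∧ m = N.blobDeg B))

end PhyloNetwork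

open MDigraph
/-! ### Auxiliary lemmas for the proof of Statement 10 -/

namespace StmtAux

open MDigraph Relation

variable {G : MDigraph}

lemma step_symm {F : Set G.E} {u v : G.V} (h : G.Step F u v) : G.Step F v u := by
  obtain ⟨e, he, h⟩ := h
  exact ⟨e, he, h.symm⟩

lemma conn_symm {F : Set G.E} {u v : G.V} (h : G.Conn F u v) : G.Conn F v u := by
  induction h with
  | refl => exact Relation.ReflTransGen.refl
  | tail _ h2 ih => exact Relation.ReflTransGen.head (step_symm h2) ih

lemma conn_mono {F F' : Set G.E} (hFF : F ⊆ F') {u v : G.V} (h : G.Conn F u v) :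
    G.Conn F' u v := by
  induction h with
  | refl => exact Relation.ReflTransGen.refl
  | tail _ h2 ih =>
    obtain ⟨e, he, hor⟩ := h2
    exact ih.tail ⟨e, hFF he, hor⟩

lemma card_quot_le {α : Type} [Finite α] (r r' : α → α → Prop)
    (h : ∀ a b, r a b → Relation.EqvGen r' a b) :
    Nat.card (Quot r') ≤ Nat.card (Quot r) := by
  have hsur : Function.Surjective
      (Quot.lift (Quot.mk r') (fun a b hab => Quot.eqvGen_sound (h a b hab)) : Quot r → Quot r') := by
    intro q
    obtain ⟨a, rfl⟩ := Quot.exists_rep q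
    exact ⟨Quot.mk r a, rfl⟩
  haveI : Finite (Quot r) := Finite.of_surjective (Quot.mk r) (fun q => Quot.exists_rep q)
  exact Nat.card_le_card_of_surjective _ hsur

lemma eqvGen_of_conn {F : Set G.E} {u v : G.V} (h : G.Conn F u v) :
    Relation.EqvGen (fun a b : (Set.univ : Set G.V) => G.Step F a.1 b.1)
      ⟨u, Set.mem_univ u⟩ ⟨v, Set.mem_univ v⟩ := by
  induction h with
  | refl => exact Relation.EqvGen.refl _
  | tail _ h2 ih =>
    exact Relation.EqvGen.trans _ _ _ ih (Relation.EqvGen.rel _ _ h2)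

lemma numComponents_univ (F : Set G.E) :
    G.numComponents Set.univ F
      = Nat.card (Quot fun a b : (Set.univ : Set G.V) => G.Step F a.1 b.1) := by
  have hset : {e ∈ F | G.src e ∈ (Set.univ : Set G.V) ∧ G.tgt e ∈ (Set.univ : Set G.V)} = F := by
    ext e; simp
  unfold MDigraph.numComponents
  simp only [hset]

/-- A cut edge of the whole graph disconnects its endpoints. -/
lemma not_conn_of_isCutEdge {e : G.E} (h : (top G).IsCutEdge e) :
    ¬ G.Conn (Set.univ \ {e}) (G.src e) (G.tgt e) := by
  intro hconn
  obtain ⟨-, hlt⟩ := h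
  have hlt' : G.numComponents Set.univ Set.univ
      < G.numComponents Set.univ (Set.univ \ {e}) := hlt
  rw [numComponents_univ, numComponents_univ] at hlt'
  have hle := card_quot_le (fun a b : (Set.univ : Set G.V) => G.Step Set.univ a.1 b.1)
    (fun a b : (Set.univ : Set G.V) => G.Step (Set.univ \ {e}) a.1 b.1) ?_
  · omega
  · rintro ⟨a, ha⟩ ⟨b, hb⟩ ⟨e', -, hor⟩
    by_cases hee : e' = e
    · subst hee
      rcases hor with ⟨h1, h2⟩ | ⟨h1, h2⟩
      · subst h1; subst h2
        exact eqvGen_of_conn hconn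
      · subst h1; subst h2
        exact Relation.EqvGen.symm _ _ (eqvGen_of_conn hconn)
    · exact Relation.EqvGen.rel _ _ ⟨e', ⟨Set.mem_univ _, by simpa using hee⟩, hor⟩

end StmtAux

namespace StmtAux

open MDigraph Relation

variable {X : Type}

section Net

variable (N : PhyloNetwork X)

lemma wf_desc : WellFounded (fun a b : N.toMDigraph.V => N.toMDigraph.DStep Set.univ b a) := by
  have h : WellFounded
      (fun a b : N.toMDigraph.V => Relation.TransGen (N.toMDigraph.DStep Set.univ) b a) := by
    haveI : IsTrans N.toMDigraph.V
        (fun a b => Relation.TransGen (N.toMDigraph.DStep Set.univ) b a) :=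
      ⟨fun _ _ _ h1 h2 => h2.trans h1⟩
    haveI : IsIrrefl N.toMDigraph.V
        (fun a b => Relation.TransGen (N.toMDigraph.DStep Set.univ) b a) :=
      ⟨fun a h => N.acyclic a h⟩
    exact Finite.wellFounded_of_trans_of_irrefl _
  exact Subrelation.wf (fun {a b} hab => Relation.TransGen.single hab) h

lemma wf_asc : WellFounded (fun a b : N.toMDigraph.V => N.toMDigraph.DStep Set.univ a b) := by
  have h : WellFounded
      (fun a b : N.toMDigraph.V => Relation.TransGen (N.toMDigraph.DStep Set.univ) a b) := by
    haveI : IsTrans N.toMDigraph.V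
        (fun a b => Relation.TransGen (N.toMDigraph.DStep Set.univ) a b) :=
      ⟨fun _ _ _ h1 h2 => h1.trans h2⟩
    haveI : IsIrrefl N.toMDigraph.V
        (fun a b => Relation.TransGen (N.toMDigraph.DStep Set.univ) a b) :=
      ⟨fun a h => N.acyclic a h⟩
    exact Finite.wellFounded_of_trans_of_irrefl _
  exact Subrelation.wf (fun {a b} hab => Relation.TransGen.single hab) h

lemma exists_out {v : N.toMDigraph.V} (hv : ∀ x, v ≠ N.leaf x) :
    ∃ e, N.toMDigraph.src e = v := by
  have hpos : 0 < N.toMDigraph.outDeg v := by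
    by_cases hr : v = N.root
    · rw [hr, N.root_out]; omega
    · rcases N.internal v hr hv with ⟨_, h2⟩ | ⟨_, h2⟩ <;> rw [h2] <;> omega
  rw [MDigraph.outDeg] at hpos
  obtain ⟨⟨⟨e, he⟩⟩, -⟩ := Nat.card_pos_iff.mp hpos
  exact ⟨e, he⟩

lemma eq_root_of_no_in {v : N.toMDigraph.V} (h : ¬ ∃ e, N.toMDigraph.tgt e = v) :
    v = N.root := by
  by_contra hr
  have hpos : 0 < N.toMDigraph.inDeg v := by
    by_cases hl : ∃ x, v = N.leaf x
    · obtain ⟨x, rfl⟩ := hl; rw [N.leaf_in]; omega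
    · rcases N.internal v hr (fun x hx => hl ⟨x, hx⟩) with ⟨h1, -⟩ | ⟨h1, -⟩ <;>
        rw [h1] <;> omega
  rw [MDigraph.inDeg] at hpos
  obtain ⟨⟨⟨e, he⟩⟩, -⟩ := Nat.card_pos_iff.mp hpos
  exact h ⟨e, he⟩

lemma root_no_in : ∀ e, N.toMDigraph.tgt e ≠ N.root := by
  intro e he
  have hpos : 0 < N.toMDigraph.inDeg N.root := by
    rw [MDigraph.inDeg]
    exact Nat.card_pos_iff.mpr ⟨⟨⟨e, he⟩⟩, inferInstance⟩
  rw [N.root_in] at hpos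
  omega

lemma root_above : ∀ v, N.toMDigraph.DConn Set.univ N.root v := by
  intro v
  refine (wf_asc N).induction v ?_
  intro v ih
  by_cases h : ∃ e, N.toMDigraph.tgt e = v
  · obtain ⟨e, rfl⟩ := h
    exact (ih _ ⟨e, Set.mem_univ e, rfl, rfl⟩).tail ⟨e, Set.mem_univ e, rfl, rfl⟩
  · obtain rfl := eq_root_of_no_in N h
    exact Relation.ReflTransGen.refl

lemma no_two_cycle {a b : N.toMDigraph.V} (h1 : N.toMDigraph.Above a b)
    (h2 : N.toMDigraph.Above b a) (hne : a ≠ b) : False := by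
  rcases Relation.reflTransGen_iff_eq_or_transGen.mp h1 with h | ht
  · exact hne h.symm
  · exact N.acyclic b (Relation.TransGen.trans_right h2 ht)

lemma eq_root_of_above_root {u : N.toMDigraph.V} (h : N.toMDigraph.Above u N.root) :
    u = N.root := by
  rcases Relation.reflTransGen_iff_eq_or_transGen.mp h with h | ht
  · exact h.symm
  · exfalso
    obtain ⟨c, -, hc⟩ := Relation.TransGen.tail'_iff.mp ht
    obtain ⟨e, -, -, htgt⟩ := hc
    exact root_no_in N e htgt

end Net

end StmtAux

namespace StmtAux

open MDigraph Relation

variable {X : Type}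

section Blob

attribute [local instance] Classical.propDecidable

variable {N : PhyloNetwork X} {B : Subgraph N.toMDigraph}

/-- The edges of the network that are not cut edges incident to the blob `B`. -/
def freeEdges (N : PhyloNetwork X) (B : Subgraph N.toMDigraph) : Set N.toMDigraph.E :=
  {e | ¬ IncidentCut (top N.toMDigraph) B e}

/-- The endpoint of an incident cut edge that is not in the blob. -/
noncomputable def ub (N : PhyloNetwork X) (B : Subgraph N.toMDigraph)
    (e : N.toMDigraph.E) : N.toMDigraph.V :=
  if N.toMDigraph.src e ∈ B.verts then N.toMDigraph.tgt e else N.toMDigraph.src e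

/-- The endpoint of an incident cut edge that is in the blob. -/
noncomputable def inB (N : PhyloNetwork X) (B : Subgraph N.toMDigraph)
    (e : N.toMDigraph.E) : N.toMDigraph.V :=
  if N.toMDigraph.src e ∈ B.verts then N.toMDigraph.src e else N.toMDigraph.tgt e

lemma ubinB_cases {e : N.toMDigraph.E} (he : IncidentCut (top N.toMDigraph) B e) :
    (ub N B e = N.toMDigraph.tgt e ∧ inB N B e = N.toMDigraph.src e ∧
      N.toMDigraph.src e ∈ B.verts ∧ N.toMDigraph.tgt e ∉ B.verts) ∨
    (ub N B e = N.toMDigraph.src e ∧ inB N B e = N.toMDigraph.tgt e ∧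
      N.toMDigraph.tgt e ∈ B.verts ∧ N.toMDigraph.src e ∉ B.verts) := by
  rcases he.2 with ⟨h1, h2⟩ | ⟨h1, h2⟩
  · exact Or.inl ⟨by unfold ub; rw [if_pos h1], by unfold inB; rw [if_pos h1], h1, h2⟩
  · exact Or.inr ⟨by unfold ub; rw [if_neg h2], by unfold inB; rw [if_neg h2], h1, h2⟩

lemma ub_not_mem {e : N.toMDigraph.E} (he : IncidentCut (top N.toMDigraph) B e) :
    ub N B e ∉ B.verts := by
  rcases ubinB_cases he with ⟨h1, -, -, h4⟩ | ⟨h1, -, -, h4⟩ <;> rw [h1] <;> exact h4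

lemma inB_mem {e : N.toMDigraph.E} (he : IncidentCut (top N.toMDigraph) B e) :
    inB N B e ∈ B.verts := by
  rcases ubinB_cases he with ⟨-, h2, h3, -⟩ | ⟨-, h2, h3, -⟩ <;> rw [h2] <;> exact h3

lemma conn_src_tgt_of {e : N.toMDigraph.E} (he : IncidentCut (top N.toMDigraph) B e)
    {S : Set N.toMDigraph.E} (h : N.toMDigraph.Conn S (ub N B e) (inB N B e)) :
    N.toMDigraph.Conn S (N.toMDigraph.src e) (N.toMDigraph.tgt e) := by
  rcases ubinB_cases he with ⟨h1, h2, -, -⟩ | ⟨h1, h2, -, -⟩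
  · rw [h1, h2] at h; exact conn_symm h
  · rw [h1, h2] at h; exact h

lemma step_inb_ub {e : N.toMDigraph.E} (he : IncidentCut (top N.toMDigraph) B e)
    {S : Set N.toMDigraph.E} (heS : e ∈ S) :
    N.toMDigraph.Step S (inB N B e) (ub N B e) := by
  rcases ubinB_cases he with ⟨h1, h2, -, -⟩ | ⟨h1, h2, -, -⟩
  · rw [h1, h2]; exact ⟨e, heS, Or.inl ⟨rfl, rfl⟩⟩
  · rw [h1, h2]; exact ⟨e, heS, Or.inr ⟨rfl, rfl⟩⟩

lemma bedges_sub : B.edges ⊆ freeEdges N B := by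
  intro e he hic
  rcases hic.2 with ⟨-, h2⟩ | ⟨-, h2⟩
  · exact h2 (B.tgt_mem e he)
  · exact h2 (B.src_mem e he)

lemma free_sub_del {e : N.toMDigraph.E} (he : IncidentCut (top N.toMDigraph) B e) :
    freeEdges N B ⊆ Set.univ \ {e} := by
  intro e' he'
  refine ⟨Set.mem_univ _, fun heq => ?_⟩
  exact he' (Set.mem_singleton_iff.mp heq ▸ he)

variable (hBlob : IsBlobIn (top N.toMDigraph) B)
include hBlob

lemma connB {a b : N.toMDigraph.V} (ha : a ∈ B.verts) (hb : b ∈ B.verts) :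
    N.toMDigraph.Conn (freeEdges N B) a b :=
  conn_mono bedges_sub (hBlob.2.1.2 a ha b hb)

/-- A vertex in the component of the non-blob endpoint of an incident cut edge
cannot be in the blob. -/
lemma not_conn_ub_blob {e : N.toMDigraph.E} (he : IncidentCut (top N.toMDigraph) B e)
    {b : N.toMDigraph.V} (hb : b ∈ B.verts) :
    ¬ N.toMDigraph.Conn (freeEdges N B) (ub N B e) b := by
  intro hconn
  apply not_conn_of_isCutEdge he.1
  apply conn_src_tgt_of he
  have h1 : N.toMDigraph.Conn (Set.univ \ {e}) (ub N B e) b :=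
    conn_mono (free_sub_del he) hconn
  have h2 : N.toMDigraph.Conn (Set.univ \ {e}) b (inB N B e) :=
    conn_mono (free_sub_del he) (connB hBlob hb (inB_mem he))
  exact h1.trans h2

/-- Distinct incident cut edges have disconnected outer components. -/
lemma not_conn_ub_ub {e f : N.toMDigraph.E} (he : IncidentCut (top N.toMDigraph) B e)
    (hf : IncidentCut (top N.toMDigraph) B f) (hne : e ≠ f) :
    ¬ N.toMDigraph.Conn (freeEdges N B) (ub N B e) (ub N B f) := by
  intro hconn
  apply not_conn_of_isCutEdge he.1
  apply conn_src_tgt_of he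
  have h1 : N.toMDigraph.Conn (Set.univ \ {e}) (ub N B e) (ub N B f) :=
    conn_mono (free_sub_del he) hconn
  have h2 : N.toMDigraph.Conn (Set.univ \ {e}) (ub N B f) (inB N B f) :=
    Relation.ReflTransGen.single
      (step_symm (step_inb_ub hf ⟨Set.mem_univ f, by simpa using (Ne.symm hne)⟩))
  have h3 : N.toMDigraph.Conn (Set.univ \ {e}) (inB N B f) (inB N B e) :=
    conn_mono (free_sub_del he) (connB hBlob (inB_mem hf) (inB_mem he))
  exact (h1.trans h2).trans h3

/-- Descending from the outer component: either we find a leaf in the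
component, or the edge points out of the blob upwards. -/
lemma descend {e : N.toMDigraph.E} (he : IncidentCut (top N.toMDigraph) B e) :
    ∀ v, N.toMDigraph.Conn (freeEdges N B) (ub N B e) v → v ∉ B.verts →
      (∃ x, N.toMDigraph.Conn (freeEdges N B) (ub N B e) (N.leaf x)) ∨
        N.toMDigraph.src e ∉ B.verts := by
  intro v
  refine (wf_desc N).induction
    (C := fun v => N.toMDigraph.Conn (freeEdges N B) (ub N B e) v → v ∉ B.verts →
      (∃ x, N.toMDigraph.Conn (freeEdges N B) (ub N B e) (N.leaf x)) ∨
        N.toMDigraph.src e ∉ B.verts) v ?_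
  intro v ih hconn hvB
  by_cases hleaf : ∃ x, v = N.leaf x
  · obtain ⟨x, rfl⟩ := hleaf
    exact Or.inl ⟨x, hconn⟩
  · obtain ⟨e₂, he₂⟩ := exists_out N (fun x hx => hleaf ⟨x, hx⟩)
    by_cases hf : e₂ ∈ freeEdges N B
    · have hconn2 : N.toMDigraph.Conn (freeEdges N B) (ub N B e) (N.toMDigraph.tgt e₂) :=
        hconn.tail ⟨e₂, hf, Or.inl ⟨he₂, rfl⟩⟩
      by_cases htB : N.toMDigraph.tgt e₂ ∈ B.verts
      · exact absurd hconn2 (not_conn_ub_blob hBlob he htB)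
      · exact ih (N.toMDigraph.tgt e₂) ⟨e₂, Set.mem_univ e₂, he₂, rfl⟩ hconn2 htB
    · have hi : IncidentCut (top N.toMDigraph) B e₂ := not_not.mp hf
      rcases ubinB_cases hi with ⟨-, -, h3, -⟩ | ⟨hub, -, -, hs⟩
      · exact absurd (he₂ ▸ h3) hvB
      · have heq : e = e₂ := by
          by_contra hne
          exact not_conn_ub_ub hBlob he hi hne (by rw [hub, he₂]; exact hconn)
        subst heq
        exact Or.inr hs

/-- Ascending from the outer component of an upward incident cut edge reaches
the root. -/
lemma ascend {e : N.toMDigraph.E} (he : IncidentCut (top N.toMDigraph) B e)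
    (hup : N.toMDigraph.src e ∉ B.verts) :
    N.toMDigraph.Conn (freeEdges N B) (ub N B e) N.root := by
  have main : ∀ v, N.toMDigraph.Conn (freeEdges N B) (ub N B e) v → v ∉ B.verts →
      N.toMDigraph.Conn (freeEdges N B) (ub N B e) N.root := by
    intro v
    refine (wf_asc N).induction
      (C := fun v => N.toMDigraph.Conn (freeEdges N B) (ub N B e) v → v ∉ B.verts →
        N.toMDigraph.Conn (freeEdges N B) (ub N B e) N.root) v ?_
    intro v ih hconn hvB
    by_cases hin : ∃ f, N.toMDigraph.tgt f = v
    · obtain ⟨f, hfv⟩ := hin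
      by_cases hf : f ∈ freeEdges N B
      · have hconn2 : N.toMDigraph.Conn (freeEdges N B) (ub N B e) (N.toMDigraph.src f) :=
          hconn.tail ⟨f, hf, Or.inr ⟨rfl, hfv⟩⟩
        by_cases hsB : N.toMDigraph.src f ∈ B.verts
        · exact absurd hconn2 (not_conn_ub_blob hBlob he hsB)
        · exact ih (N.toMDigraph.src f) ⟨f, Set.mem_univ f, rfl, hfv⟩ hconn2 hsB
      · have hi : IncidentCut (top N.toMDigraph) B f := not_not.mp hf
        rcases ubinB_cases hi with ⟨hub, -, h3, -⟩ | ⟨-, -, h3, -⟩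
        · have heq : e = f := by
            by_contra hne
            exact not_conn_ub_ub hBlob he hi hne (by rw [hub, hfv]; exact hconn)
          subst heq
          exact absurd h3 hup
        · exact absurd (hfv ▸ h3) hvB
    · obtain rfl := eq_root_of_no_in N hin
      exact hconn
  exact main (ub N B e) Relation.ReflTransGen.refl (ub_not_mem he)

end Blob

end StmtAux

namespace StmtAux

open MDigraph Relation

variable {X : Type}

section Lsa

variable {N : PhyloNetwork X} {B : Subgraph N.toMDigraph}
variable (hBlob : IsBlobIn (top N.toMDigraph) B)
include hBlob

/-- If there is an upward incident cut edge whose outer component contains no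
leaf, then the blob endpoint of that edge is a stable ancestor; for a blob
strictly below the LSA this is impossible. -/
lemma upward_good_of_lsa {e₀ : N.toMDigraph.E}
    (he₀ : IncidentCut (top N.toMDigraph) B e₀) (hup : N.toMDigraph.src e₀ ∉ B.verts)
    {lsa : N.toMDigraph.V} (hlsa : N.IsLSA lsa) (hlsanB : lsa ∉ B.verts)
    (hbelow : ∀ v ∈ B.verts, N.toMDigraph.Above lsa v) :
    ∃ x, N.toMDigraph.Conn (freeEdges N B) (ub N B e₀) (N.leaf x) := by
  by_contra hno
  have hub : ub N B e₀ = N.toMDigraph.src e₀ := by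
    rcases ubinB_cases he₀ with ⟨-, -, h3, -⟩ | ⟨h1, -, -, -⟩
    · exact absurd h3 hup
    · exact h1
  have htgtB : N.toMDigraph.tgt e₀ ∈ B.verts := by
    rcases ubinB_cases he₀ with ⟨-, -, h3, -⟩ | ⟨-, -, h3, -⟩
    · exact absurd h3 hup
    · exact h3
  have hroot : N.toMDigraph.Conn (freeEdges N B) (ub N B e₀) N.root := ascend hBlob he₀ hup
  -- the set of vertices in the outer component
  have hCnotB : ∀ w, N.toMDigraph.Conn (freeEdges N B) (ub N B e₀) w → w ∉ B.verts :=
    fun w hw hwB => not_conn_ub_blob hBlob he₀ hwB hw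
  -- one undirected step out of the component lands on tgt e₀
  have hstep_out : ∀ b c, N.toMDigraph.Conn (freeEdges N B) (ub N B e₀) b →
      N.toMDigraph.DStep Set.univ b c →
      N.toMDigraph.Conn (freeEdges N B) (ub N B e₀) c ∨ c = N.toMDigraph.tgt e₀ := by
    intro b c hCb hbc
    obtain ⟨f, -, hsrc, htgt⟩ := hbc
    by_cases hf : f ∈ freeEdges N B
    · exact Or.inl (hCb.tail ⟨f, hf, Or.inl ⟨hsrc, htgt⟩⟩)
    · have hi : IncidentCut (top N.toMDigraph) B f := not_not.mp hf
      rcases ubinB_cases hi with ⟨-, -, h3, -⟩ | ⟨hubf, -, -, -⟩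
      · exact absurd (hsrc ▸ h3) (hCnotB b hCb)
      · have heq : e₀ = f := by
          by_contra hne
          exact not_conn_ub_ub hBlob he₀ hi hne (by rw [hubf, hsrc]; exact hCb)
        exact Or.inr (by rw [← htgt, ← heq])
  -- (i) tgt e₀ is above every leaf
  have hi : ∀ x, N.toMDigraph.Above (N.toMDigraph.tgt e₀) (N.leaf x) := by
    intro x
    have key : ∀ z, N.toMDigraph.DConn Set.univ N.root z →
        N.toMDigraph.Conn (freeEdges N B) (ub N B e₀) z ∨
          N.toMDigraph.Above (N.toMDigraph.tgt e₀) z := by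
      intro z hz
      induction hz with
      | refl => exact Or.inl hroot
      | tail h1 h2 ih =>
        rcases ih with hC | hA
        · rcases hstep_out _ _ hC h2 with hC' | rfl
          · exact Or.inl hC'
          · exact Or.inr Relation.ReflTransGen.refl
        · exact Or.inr (hA.tail h2)
    rcases key (N.leaf x) (root_above N _) with hC | hA
    · exact absurd ⟨x, hC⟩ hno
    · exact hA
  -- (ii) tgt e₀ is on every root-leaf path
  have hii : ∀ x, N.toMDigraph.OnEveryPath (N.toMDigraph.tgt e₀) N.root (N.leaf x) := by
    intro x
    rintro ⟨-, -, hpath⟩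
    have key : ∀ z, Relation.ReflTransGen
        (fun a b => N.toMDigraph.DStep Set.univ a b ∧ a ≠ N.toMDigraph.tgt e₀ ∧
          b ≠ N.toMDigraph.tgt e₀) N.root z →
        N.toMDigraph.Conn (freeEdges N B) (ub N B e₀) z := by
      intro z hz
      induction hz with
      | refl => exact hroot
      | tail h1 h2 ih =>
        obtain ⟨hstep, -, hne⟩ := h2
        rcases hstep_out _ _ ih hstep with hC' | h
        · exact hC'
        · exact absurd h hne
    exact hno ⟨x, key _ hpath⟩
  -- tgt e₀ is a stable ancestor, contradiction with the LSA assumptions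
  have hsa : N.IsStableAncestor (N.toMDigraph.tgt e₀) := ⟨hi, hii⟩
  have h1 : N.toMDigraph.Above (N.toMDigraph.tgt e₀) lsa := hlsa.2 _ hsa
  have h2 : N.toMDigraph.Above lsa (N.toMDigraph.tgt e₀) := hbelow _ htgtB
  exact no_two_cycle N h1 h2 (fun heq => hlsanB (heq ▸ htgtB))

end Lsa

lemma exists_three {T : Type} [Finite T] (P : T → Prop)
    (hsub : ∀ a b : T, ¬ P a → ¬ P b → a = b)
    (hcard : 4 ≤ Nat.card T ∨ (3 ≤ Nat.card T ∧ ∀ a, P a)) :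
    ∃ a b c : T, a ≠ b ∧ a ≠ c ∧ b ≠ c ∧ P a ∧ P b ∧ P c := by
  classical
  haveI := Fintype.ofFinite T
  rw [Nat.card_eq_fintype_card] at hcard
  set s : Finset T := Finset.univ.filter P with hs
  have hcard3 : 3 ≤ s.card := by
    rcases hcard with h4 | ⟨h3, hall⟩
    · have hc : (Finset.univ.filter (fun a : T => ¬ P a)).card ≤ 1 := by
        refine Finset.card_le_one.mpr ?_
        intro a ha b hb
        simp only [Finset.mem_filter] at ha hb
        exact hsub a b ha.2 hb.2
      have := Finset.card_filter_add_card_filter_not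
        (s := (Finset.univ : Finset T)) (p := P)
      rw [Finset.card_univ] at this
      rw [← hs] at this
      omega
    · have hsu : s = Finset.univ := by
        rw [hs]
        exact Finset.filter_true_of_mem (fun a _ => hall a)
      rw [hsu, Finset.card_univ]
      omega
  obtain ⟨a, ha⟩ := Finset.card_pos.mp (by omega : 0 < s.card)
  obtain ⟨b, hb⟩ := Finset.card_pos.mp
    (show 0 < (s.erase a).card by rw [Finset.card_erase_of_mem ha]; omega)
  have hb' := Finset.mem_erase.mp hb
  obtain ⟨c, hc⟩ := Finset.card_pos.mp
    (show 0 < ((s.erase a).erase b).card by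
      rw [Finset.card_erase_of_mem hb, Finset.card_erase_of_mem ha]; omega)
  have hc' := Finset.mem_erase.mp hc
  have hc'' := Finset.mem_erase.mp hc'.2
  have hPa : P a := (Finset.mem_filter.mp ha).2
  have hPb : P b := (Finset.mem_filter.mp hb'.2).2
  have hPc : P c := (Finset.mem_filter.mp hc''.2).2
  exact ⟨a, b, c, Ne.symm hb'.1, Ne.symm hc''.1, Ne.symm hc'.1, hPa, hPb, hPc⟩

end StmtAux

/-- Let `N⁺` be a rooted binary phylogenetic network on taxon set `X`.  Every
`m`-blob of `N⁺` with `m ≥ 3` that lies below the LSA of `N⁺` (all its nodes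
are below the LSA and it does not contain the LSA) is determined by some
3-element subset of `X`; moreover, if the blob containing the LSA is an
`m`-blob with `m ≥ 4`, it too is determined by some 3-element subset of `X`. -/
theorem stmt_10 {X : Type} (N : PhyloNetwork X) (lsa : N.toMDigraph.V)
    (hlsa : N.IsLSA lsa) (B : Subgraph N.toMDigraph) (m : ℕ) (hm : 3 ≤ m)
    (hB : N.IsMBlob B m)
    (hcase : (lsa ∉ B.verts ∧ ∀ v ∈ B.verts, N.toMDigraph.Above lsa v) ∨
             (lsa ∈ B.verts ∧ 4 ≤ m)) :
    ∃ x y z : X, x ≠ y ∧ x ≠ z ∧ y ≠ z ∧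
      DeterminesIn (top N.toMDigraph) B N.leaf ({x, y, z} : Set X) := by
  classical
  obtain ⟨hBlob, hdeg⟩ := hB
  have hcardT : 3 ≤ Nat.card {e // IncidentCut (top N.toMDigraph) B e} := by
    have hk : 3 ≤ N.blobDeg B := by
      rcases hdeg with ⟨hroot, hmeq⟩ | ⟨-, hmeq⟩
      · rcases hcase with ⟨hlsaB, habove⟩ | ⟨-, hm4⟩
        · exact absurd
            (by rw [StmtAux.eq_root_of_above_root N (habove N.root hroot)]; exact hroot)
            hlsaB
        · omega
      · omega
    exact hk
  let T := {e // IncidentCut (top N.toMDigraph) B e}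
  let P : T → Prop := fun a =>
    ∃ x, N.toMDigraph.Conn (StmtAux.freeEdges N B) (StmtAux.ub N B a.1) (N.leaf x)
  have hup_of_bad : ∀ a : T, ¬ P a → N.toMDigraph.src a.1 ∉ B.verts := by
    intro a hpa
    rcases StmtAux.descend hBlob a.2 (StmtAux.ub N B a.1) Relation.ReflTransGen.refl
        (StmtAux.ub_not_mem a.2) with h | h
    · exact absurd h hpa
    · exact h
  have hbad_root : ∀ a : T, ¬ P a →
      N.toMDigraph.Conn (StmtAux.freeEdges N B) (StmtAux.ub N B a.1) N.root :=
    fun a hpa => StmtAux.ascend hBlob a.2 (hup_of_bad a hpa)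
  have hsub : ∀ a b : T, ¬ P a → ¬ P b → a = b := by
    intro a b hpa hpb
    by_contra hne
    exact StmtAux.not_conn_ub_ub hBlob a.2 b.2 (fun h => hne (Subtype.ext h))
      ((hbad_root a hpa).trans (StmtAux.conn_symm (hbad_root b hpb)))
  have hcard : 4 ≤ Nat.card T ∨ (3 ≤ Nat.card T ∧ ∀ a, P a) := by
    by_cases hroot : N.root ∈ B.verts
    · right
      refine ⟨hcardT, ?_⟩
      intro a
      by_contra hpa
      exact StmtAux.not_conn_ub_blob hBlob a.2 hroot (hbad_root a hpa)
    · rcases hcase with ⟨hlsaB, habove⟩ | ⟨hlsaB, hm4⟩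
      · right
        refine ⟨hcardT, ?_⟩
        intro a
        by_contra hpa
        exact hpa (StmtAux.upward_good_of_lsa hBlob a.2 (hup_of_bad a hpa) hlsa hlsaB habove)
      · left
        have hmeq : m = N.blobDeg B := by
          rcases hdeg with ⟨h, -⟩ | ⟨-, h⟩
          · exact absurd h hroot
          · exact h
        have hdd : N.blobDeg B = Nat.card T := rfl
        omega
  obtain ⟨a, b, c, hab, hac, hbc, ⟨xa, hxa⟩, ⟨xb, hxb⟩, ⟨xc, hxc⟩⟩ :=
    StmtAux.exists_three P hsub hcard
  have key : ∀ (s t : T), s ≠ t → ∀ (x y : X),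
      N.toMDigraph.Conn (StmtAux.freeEdges N B) (StmtAux.ub N B s.1) (N.leaf x) →
      N.toMDigraph.Conn (StmtAux.freeEdges N B) (StmtAux.ub N B t.1) (N.leaf y) →
      ¬ N.toMDigraph.Conn (StmtAux.freeEdges N B) (N.leaf x) (N.leaf y) := by
    intro s t hst x y hx hy hcon
    exact StmtAux.not_conn_ub_ub hBlob s.2 t.2 (fun h => hst (Subtype.ext h))
      ((hx.trans hcon).trans (StmtAux.conn_symm hy))
  have hxab : xa ≠ xb := fun h =>
    key a b hab xa xb hxa hxb (by rw [h]; exact Relation.ReflTransGen.refl)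
  have hxac : xa ≠ xc := fun h =>
    key a c hac xa xc hxa hxc (by rw [h]; exact Relation.ReflTransGen.refl)
  have hxbc : xb ≠ xc := fun h =>
    key b c hbc xb xc hxb hxc (by rw [h]; exact Relation.ReflTransGen.refl)
  refine ⟨xa, xb, xc, hxab, hxac, hxbc, ?_⟩
  intro s hs t ht hst hcon
  have hcon' : N.toMDigraph.Conn (StmtAux.freeEdges N B) (N.leaf s) (N.leaf t) :=
    StmtAux.conn_mono (fun e he => he.2) hcon
  simp only [Set.mem_insert_iff, Set.mem_singleton_iff] at hs ht
  rcases hs with hs | hs | hs <;> rcases ht with ht | ht | ht <;>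
    rw [hs] at hcon' hst <;> rw [ht] at hcon' hst
  · exact hst rfl
  · exact key a b hab xa xb hxa hxb hcon'
  · exact key a c hac xa xc hxa hxc hcon'
  · exact key b a (Ne.symm hab) xb xa hxb hxa hcon'
  · exact hst rfl
  · exact key b c hbc xb xc hxb hxc hcon'
  · exact key c a (Ne.symm hac) xc xa hxc hxa hcon'
  · exact key c b (Ne.symm hbc) xc xb hxc hxb hcon'
  · exact hst rfl
end

section
/- Let N+ be a rooted binary phylogenetic network on taxon set X with |X| ≥ 4, and let {a,b,c,d} ⊆ X be a set of four taxa that is not a B-quartet on N+. Then there is an edge of the tree of blobs of N− whose deletion disconnects exactly two of the taxa a,b,c,d from the other two; consequently the reduced unrooted tree of blobs T_rd(N−) displays a resolved quartet tree on {a,b,c,d}. -/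
open MDigraph

/-!
No cut edge splits the quartet two against two, so every cut edge has a majority side
containing at least three of the four leaves. Two majority sides share a leaf, and sides of
edges in a connected graph have the Helly property, so some vertex `m` lies on the majority
side of every cut edge. The blob of `m` is determined by the quartet: two distinct leaves cannot
both lie in it, as the blob of a leaf is trivial; and if a leaf lies outside it, the incident cut
edge separating that leaf from `m` would put both leaves outside a majority side as soon as they
are joined without crossing an incident cut edge.
-/

theorem List.exists_mem_and_of_pairwise_or {α : Type*} {P R : α → Prop} {l : List α}
    (hl : 3 ≤ l.length) (hP : l.Pairwise fun x y => P x ∨ P y)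
    (hR : l.Pairwise fun x y => R x ∨ R y) : ∃ x ∈ l, P x ∧ R x := by
  match l, hl with
  | x :: y :: z :: l, _ =>
    simp only [List.pairwise_cons, List.mem_cons, forall_eq_or_imp] at hP hR
    by_contra! h
    have hx := h x (by simp)
    have hy := h y (by simp)
    have hz := h z (by simp)
    tauto

namespace MDigraph

variable {G : MDigraph}

def Connected (G : MDigraph) : Prop := ∀ u v : G.V, G.Conn Set.univ u v

instance (F : Set G.E) : Std.Symm (G.Step F) :=
  ⟨fun _ _ ⟨e, he, h⟩ => ⟨e, he, h.symm⟩⟩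

theorem Conn.refl {F : Set G.E} {u : G.V} : G.Conn F u u := Relation.ReflTransGen.refl

theorem Conn.symm {F : Set G.E} {u v : G.V} (h : G.Conn F u v) : G.Conn F v u :=
  Std.Symm.symm (r := Relation.ReflTransGen (G.Step F)) _ _ h

theorem Conn.trans {F : Set G.E} {u v w : G.V} (h : G.Conn F u v) (h' : G.Conn F v w) :
    G.Conn F u w :=
  Relation.ReflTransGen.trans h h'

theorem Conn.tail {F : Set G.E} {u v w : G.V} (h : G.Conn F u v) (h' : G.Step F v w) :
    G.Conn F u w :=
  Relation.ReflTransGen.tail h h'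

theorem Conn.mono {F F' : Set G.E} (hF : F ⊆ F') {u v : G.V} (h : G.Conn F u v) :
    G.Conn F' u v :=
  Relation.ReflTransGen.mono (fun _ _ ⟨e, he, h⟩ => ⟨e, hF he, h⟩) _ _ h

theorem conn_src_tgt {F : Set G.E} {e : G.E} (he : e ∈ F) : G.Conn F (G.src e) (G.tgt e) :=
  Relation.ReflTransGen.single ⟨e, he, Or.inl ⟨rfl, rfl⟩⟩

theorem Conn.diff_singleton {F : Set G.E} {e : G.E} {u v : G.V}
    (he : G.Conn (F \ {e}) (G.src e) (G.tgt e)) (h : G.Conn F u v) : G.Conn (F \ {e}) u v := by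
  induction h with
  | refl => exact Conn.refl
  | tail _ step ih =>
    obtain ⟨f, hf, hends⟩ := step
    by_cases hfe : f = e
    · subst hfe
      rcases hends with ⟨rfl, rfl⟩ | ⟨rfl, rfl⟩
      exacts [ih.trans he, ih.trans he.symm]
    · exact ih.tail ⟨f, ⟨hf, hfe⟩, hends⟩

namespace Subgraph

variable {H : Subgraph G}

theorem exists_mk_eq_of_conn {u v : G.V} (hu : u ∈ H.verts) (h : G.Conn H.edges u v) :
    ∃ hv : v ∈ H.verts, Quot.mk (fun x y : H.verts =>
        G.Step {e ∈ H.edges | G.src e ∈ H.verts ∧ G.tgt e ∈ H.verts} x.1 y.1) ⟨u, hu⟩ =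
      Quot.mk _ ⟨v, hv⟩ := by
  induction h with
  | refl => exact ⟨hu, rfl⟩
  | tail _ step ih =>
    obtain ⟨hw, hmk⟩ := ih
    obtain ⟨f, hf, hends⟩ := step
    have hfH := And.intro hf (And.intro (H.src_mem f hf) (H.tgt_mem f hf))
    rcases hends with ⟨h1, h2⟩ | ⟨h1, h2⟩
    · exact ⟨h2 ▸ H.tgt_mem f hf, hmk.trans (Quot.sound ⟨f, hfH, Or.inl ⟨h1, h2⟩⟩)⟩
    · exact ⟨h1 ▸ H.src_mem f hf, hmk.trans (Quot.sound ⟨f, hfH, Or.inr ⟨h1, h2⟩⟩)⟩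

theorem numComponents_eq_one (hH : H.IsConnected) : H.numComponents = 1 := by
  refine Nat.card_eq_one_iff_unique.2 ⟨⟨fun x y => ?_⟩, ⟨Quot.mk _ ⟨_, hH.1.some_mem⟩⟩⟩
  induction x using Quot.ind with | _ u => ?_
  induction y using Quot.ind with | _ v => ?_
  obtain ⟨_, h⟩ := exists_mk_eq_of_conn u.2 (hH.2 u u.2 v v.2)
  exact h

theorem two_le_numComponents {u v : G.V} (hu : u ∈ H.verts) (hv : v ∈ H.verts)
    (h : ¬ G.Conn H.edges u v) : 2 ≤ H.numComponents := by
  refine @Finite.one_lt_card _ _ ⟨Quot.mk _ ⟨u, hu⟩, Quot.mk _ ⟨v, hv⟩, fun hmk => h ?_⟩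
  refine (?_ : ∀ x y, Relation.EqvGen _ x y → G.Conn H.edges x.1 y.1) _ _ (Quot.eqvGen_exact hmk)
  intro x y hxy
  induction hxy with
  | rel _ _ hxy =>
    obtain ⟨f, hf, hends⟩ := hxy
    exact Relation.ReflTransGen.single ⟨f, hf.1, hends⟩
  | refl => exact Conn.refl
  | symm _ _ _ ih => exact ih.symm
  | trans _ _ _ _ _ ih ih' => exact ih.trans ih'

theorem isCutEdge_iff (hH : H.IsConnected) {e : G.E} :
    H.IsCutEdge e ↔ e ∈ H.edges ∧ ¬ G.Conn (H.edges \ {e}) (G.src e) (G.tgt e) := by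
  refine ⟨fun ⟨he, hlt⟩ => ⟨he, fun hcon => ?_⟩, fun ⟨he, hdis⟩ => ⟨he, ?_⟩⟩
  · have hdel : (H.deleteEdge e).IsConnected :=
      ⟨hH.1, fun u hu v hv => hcon.diff_singleton (hH.2 u hu v hv)⟩
    rw [numComponents_eq_one hH, numComponents_eq_one hdel] at hlt
    exact lt_irrefl 1 hlt
  · rw [numComponents_eq_one hH]
    exact two_le_numComponents (H := H.deleteEdge e) (H.src_mem e he) (H.tgt_mem e he) hdis

end Subgraph

/-- For a cut edge `e`, this says that `u` and `v` lie on the same side of `e`. -/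
def SameSide (e : G.E) (u v : G.V) : Prop := G.Conn {e}ᶜ u v

def cycleEdges (G : MDigraph) : Set G.E := {e | G.SameSide e (G.src e) (G.tgt e)}

theorem SameSide.refl {e : G.E} {u : G.V} : G.SameSide e u u := Conn.refl

theorem SameSide.symm {e : G.E} {u v : G.V} (h : G.SameSide e u v) : G.SameSide e v u :=
  Conn.symm h

theorem SameSide.trans {e : G.E} {u v w : G.V} (h : G.SameSide e u v)
    (h' : G.SameSide e v w) : G.SameSide e u w :=
  Conn.trans h h'

theorem sameSide_src_tgt {e f : G.E} (h : f ≠ e) : G.SameSide e (G.src f) (G.tgt f) :=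
  conn_src_tgt h

theorem conn_top_diff_iff {e : G.E} {u v : G.V} :
    G.Conn ((top G).edges \ {e}) u v ↔ G.SameSide e u v := by
  rw [SameSide, Set.compl_eq_univ_sdiff]
  rfl

theorem sameSide_src_or_sameSide_tgt (hG : G.Connected) (e : G.E) (v : G.V) :
    G.SameSide e (G.src e) v ∨ G.SameSide e (G.tgt e) v := by
  induction hG (G.src e) v with
  | refl => exact Or.inl SameSide.refl
  | tail _ step ih =>
    obtain ⟨f, -, hends⟩ := step
    by_cases hfe : f = e
    · subst hfe
      rcases hends with ⟨-, rfl⟩ | ⟨rfl, -⟩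
      exacts [Or.inr SameSide.refl, Or.inl SameSide.refl]
    · exact ih.imp (Conn.tail · ⟨f, hfe, hends⟩) (Conn.tail · ⟨f, hfe, hends⟩)

theorem sameSide_of_not_sameSide (hG : G.Connected) {e : G.E} {u v w : G.V}
    (hu : ¬ G.SameSide e u w) (hv : ¬ G.SameSide e v w) : G.SameSide e u v := by
  have side := sameSide_src_or_sameSide_tgt hG e
  rcases side u with hu' | hu' <;> rcases side v with hv' | hv'
  · exact hu'.symm.trans hv'
  · rcases side w with hw' | hw'
    exacts [absurd (hu'.symm.trans hw') hu, absurd (hv'.symm.trans hw') hv]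
  · rcases side w with hw' | hw'
    exacts [absurd (hv'.symm.trans hw') hv, absurd (hu'.symm.trans hw') hu]
  · exact hu'.symm.trans hv'

theorem not_mem_cycleEdges_of_not_sameSide (hG : G.Connected) {e : G.E} {u v : G.V}
    (h : ¬ G.SameSide e u v) : e ∉ G.cycleEdges := fun he =>
  h (conn_top_diff_iff.1 (Conn.diff_singleton (conn_top_diff_iff.2 he) (hG u v)))

theorem isCutEdge_top_iff (hG : G.Connected) {e : G.E} :
    (top G).IsCutEdge e ↔ e ∉ G.cycleEdges := by
  have htop : (top G).IsConnected := ⟨⟨G.src e, trivial⟩, fun u _ v _ => hG u v⟩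
  rw [Subgraph.isCutEdge_iff htop, conn_top_diff_iff]
  exact and_iff_right trivial

def Splits (e : G.E) (p q r s : G.V) : Prop :=
  G.SameSide e p q ∧ G.SameSide e r s ∧ ¬ G.SameSide e p r

theorem cutSep_top_of_splits {X : Type} (hG : G.Connected) {leaf : X → G.V} {p q r s : X}
    {e : G.E} (h : G.Splits e (leaf p) (leaf q) (leaf r) (leaf s)) :
    CutSep (top G) leaf p q r s :=
  ⟨e, (isCutEdge_top_iff hG).2 (not_mem_cycleEdges_of_not_sameSide hG h.2.2),
    conn_top_diff_iff.2 h.1, conn_top_diff_iff.2 h.2.1, fun h' => h.2.2 (conn_top_diff_iff.1 h')⟩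

/-- All vertices of `l` but at most one lie on the side of `e` containing `v`. -/
def OnMajoritySide (e : G.E) (l : List G.V) (v : G.V) : Prop :=
  l.Pairwise fun x y => G.SameSide e x v ∨ G.SameSide e y v

theorem exists_onMajoritySide (hG : G.Connected) (e : G.E) {p q r s : G.V}
    (h₁ : ¬ G.Splits e p q r s) (h₂ : ¬ G.Splits e p r q s) (h₃ : ¬ G.Splits e p s q r) :
    ∃ v, G.OnMajoritySide e [p, q, r, s] v := by
  have two := @sameSide_of_not_sameSide _ hG e
  simp only [OnMajoritySide, List.pairwise_cons, List.mem_cons, forall_eq_or_imp,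
    List.Pairwise.nil, and_true, List.not_mem_nil, IsEmpty.forall_iff, implies_true]
  by_cases hpq : G.SameSide e p q
  · refine ⟨p, ⟨Or.inl SameSide.refl, Or.inl SameSide.refl, Or.inl SameSide.refl⟩,
      ⟨Or.inl hpq.symm, Or.inl hpq.symm⟩, ?_⟩
    by_contra! hrs
    exact h₁ ⟨hpq, two hrs.1 hrs.2, fun hpr => hrs.1 hpr.symm⟩
  · refine ⟨r, ⟨?_, Or.inr SameSide.refl, ?_⟩, ⟨Or.inr SameSide.refl, ?_⟩,
      Or.inl SameSide.refl⟩ <;> by_contra! hne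
    · exact hpq (two hne.1 hne.2)
    · exact h₃ ⟨two hne.1 hne.2, two (fun h => hpq h.symm) (fun h => hne.1 h.symm), hpq⟩
    · exact h₂ ⟨two hpq (fun h => hne.1 h.symm), two hne.1 hne.2, hpq⟩

theorem sameSide_or_sameSide_src {e f : G.E} {m v : G.V} (h : G.SameSide e m v) :
    G.SameSide f m v ∨ G.SameSide e m (G.src f) := by
  induction h with
  | refl => exact Or.inl SameSide.refl
  | @tail u w hmu step ih =>
    refine ih.elim (fun hf => ?_) Or.inr
    have hmw : G.SameSide e m w := Conn.tail hmu step
    obtain ⟨g, -, hends⟩ := step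
    by_cases hgf : g = f
    · subst hgf
      rcases hends with ⟨h, -⟩ | ⟨h, -⟩ <;> rw [h]
      exacts [Or.inr hmu, Or.inr hmw]
    · exact Or.inl (Conn.tail hf ⟨g, hgf, hends⟩)

/-- Helly property: pairwise intersecting sides of edges have a common point. -/
theorem exists_forall_sameSide [Nonempty G.V] (hG : G.Connected) (anchor : G.E → G.V)
    (hanchor : ∀ e f, ∃ v, G.SameSide e v (anchor e) ∧ G.SameSide f v (anchor f)) :
    ∃ m, ∀ e, G.SameSide e m (anchor e) := by
  obtain ⟨m, hm⟩ := Finite.exists_max fun v => {e | G.SameSide e v (anchor e)}.ncard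
  refine ⟨m, fun f => by_contra fun hmf => ?_⟩
  -- an endpoint `w` of `f` on the side of `anchor f` beats `m`
  obtain ⟨w, hwf, hw⟩ : ∃ w, G.SameSide f w (anchor f) ∧ (w = G.src f ∨ w = G.tgt f) := by
    rcases sameSide_src_or_sameSide_tgt hG f (anchor f) with h | h
    exacts [⟨_, h, Or.inl rfl⟩, ⟨_, h, Or.inr rfl⟩]
  have hsub : ∀ e, G.SameSide e m (anchor e) → G.SameSide e w (anchor e) := by
    intro e he
    have hef : e ≠ f := by rintro rfl; exact hmf he
    obtain ⟨v, hve, hvf⟩ := hanchor e f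
    have hsrc : G.SameSide e m (G.src f) :=
      (sameSide_or_sameSide_src (he.trans hve.symm)).resolve_left fun h => hmf (h.trans hvf)
    have hmw : G.SameSide e m w := by
      rcases hw with rfl | rfl
      exacts [hsrc, hsrc.trans (sameSide_src_tgt hef.symm)]
    exact hmw.symm.trans he
  have hlt := Set.ncard_lt_ncard ((Set.ssubset_iff_of_subset hsub).2 ⟨f, hwf, hmf⟩)
  exact hlt.not_ge (hm w)

theorem exists_forall_onMajoritySide [Nonempty G.V] (hG : G.Connected) {l : List G.V}
    (hl : 3 ≤ l.length) (h : ∀ e, ∃ v, G.OnMajoritySide e l v) :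
    ∃ m, ∀ e, G.OnMajoritySide e l m := by
  choose anchor hanchor using h
  obtain ⟨m, hm⟩ := exists_forall_sameSide hG anchor fun e f => by
    obtain ⟨x, -, hx⟩ := List.exists_mem_and_of_pairwise_or hl (hanchor e) (hanchor f)
    exact ⟨x, hx⟩
  exact ⟨m, fun e => (hanchor e).imp fun h =>
    h.imp (·.trans (hm e).symm) (·.trans (hm e).symm)⟩

def blobOf (m : G.V) : Subgraph G where
  verts := {v | G.Conn G.cycleEdges m v}
  edges := {e | e ∈ G.cycleEdges ∧ G.Conn G.cycleEdges m (G.src e)}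
  src_mem _ he := he.2
  tgt_mem e he := he.2.tail ⟨e, he.1, Or.inl ⟨rfl, rfl⟩⟩

/-- `g` is the edge along which a walk from `m` to `v` last leaves the component of `m` in `F`. -/
theorem conn_or_exists_not_sameSide {F F' : Set G.E}
    (hF : ∀ g ∈ F', g ∉ F → g ∉ G.cycleEdges) {m v : G.V} (h : G.Conn F' m v) :
    G.Conn F m v ∨ ∃ g ∈ F', g ∉ F ∧
      Xor (G.Conn F m (G.src g)) (G.Conn F m (G.tgt g)) ∧ ¬ G.SameSide g m v := by
  induction h with
  | refl => exact Or.inl Conn.refl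
  | @tail u w _ step ih =>
    by_cases hw : G.Conn F m w
    · exact Or.inl hw
    refine Or.inr ?_
    obtain ⟨f, hfF', hends⟩ := step
    by_cases hu : G.Conn F m u
    · have hfF : f ∉ F := fun hf => hw (hu.tail ⟨f, hf, hends⟩)
      have hmu : G.SameSide f m u := hu.mono fun g hg (hgf : g = f) => hfF (hgf ▸ hg)
      have hcut := hF f hfF' hfF
      refine ⟨f, hfF', hfF, ?_, fun hmw => hcut ?_⟩ <;>
        rcases hends with ⟨rfl, rfl⟩ | ⟨rfl, rfl⟩
      exacts [Or.inl ⟨hu, hw⟩, Or.inr ⟨hu, hw⟩, hmu.symm.trans hmw, hmw.symm.trans hmu]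
    · obtain ⟨g, hgF', hgF, hxor, hsep⟩ := ih.resolve_left hu
      have hgf : g ≠ f := by
        rintro rfl
        rcases hends with ⟨rfl, rfl⟩ | ⟨rfl, rfl⟩ <;> rcases hxor with ⟨h, -⟩ | ⟨h, -⟩ <;>
          contradiction
      have huw : G.SameSide g u w := Relation.ReflTransGen.single ⟨f, Ne.symm hgf, hends⟩
      exact ⟨g, hgF', hgF, hxor, fun hmw => hsep (hmw.trans huw.symm)⟩

theorem conn_cycleEdges_diff {e : G.E} (he : e ∈ G.cycleEdges) :
    G.Conn (G.cycleEdges \ {e}) (G.src e) (G.tgt e) := by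
  refine (conn_or_exists_not_sameSide (F := G.cycleEdges \ {e}) (F' := {e}ᶜ)
    (fun g hge hg hgc => hg ⟨hgc, hge⟩) he).resolve_right ?_
  rintro ⟨g, hge, -, -, hsep⟩
  exact hsep (sameSide_src_tgt (Ne.symm hge))

theorem exists_incidentCut_not_sameSide (hG : G.Connected) {m v : G.V}
    (hv : v ∉ (G.blobOf m).verts) :
    ∃ g, IncidentCut (top G) (G.blobOf m) g ∧ ¬ G.SameSide g m v := by
  obtain hmv | ⟨g, -, hg, hxor, hsep⟩ :=
    conn_or_exists_not_sameSide (F := G.cycleEdges) (fun _ _ hg => hg) (hG m v)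
  · exact absurd hmv hv
  · exact ⟨g, ⟨(isCutEdge_top_iff hG).2 hg, hxor⟩, hsep⟩

theorem conn_inter_blobOf_edges {F : Set G.E} (hF : F ⊆ G.cycleEdges) {m x y : G.V}
    (hx : G.Conn G.cycleEdges m x) (h : G.Conn F x y) :
    G.Conn (F ∩ (G.blobOf m).edges) x y := by
  induction h with
  | refl => exact Conn.refl
  | @tail u w hxu step ih =>
    have hmu : G.Conn G.cycleEdges m u := hx.trans (Conn.mono hF hxu)
    obtain ⟨f, hf, hends⟩ := step
    have hmw : G.Conn G.cycleEdges m w := hmu.tail ⟨f, hF hf, hends⟩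
    have hmf : G.Conn G.cycleEdges m (G.src f) := by
      rcases hends with ⟨h, -⟩ | ⟨h, -⟩ <;> rw [h]
      exacts [hmu, hmw]
    exact ih.tail ⟨f, ⟨hf, hF hf, hmf⟩, hends⟩

theorem isBlobIn_blobOf (m : G.V) : IsBlobIn (top G) (G.blobOf m) := by
  have hconn : (G.blobOf m).IsConnected := by
    refine ⟨⟨m, Conn.refl⟩, fun u hu v hv => ?_⟩
    refine Conn.mono (Set.inter_subset_right (s := G.cycleEdges)) ?_
    exact (conn_inter_blobOf_edges subset_rfl Conn.refl hu).symm.trans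
      (conn_inter_blobOf_edges subset_rfl Conn.refl hv)
  refine ⟨⟨Set.subset_univ _, Set.subset_univ _⟩, hconn, fun e hcut => ?_,
    fun B _ hB hBcut hle => ?_⟩
  · obtain ⟨he, hdis⟩ := (Subgraph.isCutEdge_iff hconn).1 hcut
    refine hdis (Conn.mono ?_ (conn_inter_blobOf_edges Set.sdiff_subset he.2
      (conn_cycleEdges_diff he.1)))
    exact fun f ⟨⟨_, hfe⟩, hf⟩ => ⟨hf, hfe⟩
  · have hBcyc : B.edges ⊆ G.cycleEdges := fun f hf => by_contra fun hfc =>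
      hBcut f ((Subgraph.isCutEdge_iff hB).2 ⟨hf, fun h => hfc (h.mono fun g hg => hg.2)⟩)
    have hmB : m ∈ B.verts := hle.1 Conn.refl
    exact ⟨fun v hv => (hB.2 m hmB v hv).mono hBcyc,
      fun f hf => ⟨hBcyc hf, (hB.2 m hmB _ (B.src_mem f hf)).mono hBcyc⟩⟩

theorem eq_of_conn_cycleEdges {v w : G.V} (hout : ∀ e, G.src e ≠ v)
    (hin : ∀ e f, G.tgt e = v → G.tgt f = v → e = f) (h : G.Conn G.cycleEdges v w) :
    w = v := by
  have hstep : ∀ {F : Set G.E} {y}, G.Step F v y → ∃ e ∈ F, G.src e = y ∧ G.tgt e = v := by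
    rintro F y ⟨e, he, ⟨h, -⟩ | hends⟩
    exacts [absurd h (hout e), ⟨e, he, hends⟩]
  rcases Relation.ReflTransGen.cases_head h with rfl | ⟨y, hvy, -⟩
  · rfl
  -- the only edge at `v` enters it, so it cannot lie on a cycle
  obtain ⟨e, he, -, hev⟩ := hstep hvy
  have hve : G.Conn {e}ᶜ v (G.src e) := hev ▸ Conn.symm he
  rcases Relation.ReflTransGen.cases_head hve with h' | ⟨z, hvz, -⟩
  · exact absurd h'.symm (hout e)
  · obtain ⟨f, hf, -, hfv⟩ := hstep hvz
    exact absurd (hin f e hfv hev) hf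

theorem not_conn_of_forall_sameSide_or (hG : G.Connected) {m x y : G.V}
    (hx : ∀ w, G.Conn G.cycleEdges x w → w = x) (hxy : x ≠ y)
    (hmaj : ∀ e, G.SameSide e x m ∨ G.SameSide e y m) {F : Set G.E}
    (hF : ∀ e ∈ F, ¬ IncidentCut (top G) (G.blobOf m) e) : ¬ G.Conn F x y := by
  intro h
  have key : ∀ z, z = x ∨ z = y → z ∉ (G.blobOf m).verts → False := by
    rintro z hz hzB
    obtain ⟨g, hg, hsep⟩ := exists_incidentCut_not_sameSide hG hzB
    have hxy' : G.SameSide g x y := h.mono fun f hf (hfg : f = g) => hF f hf (hfg ▸ hg)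
    apply hsep
    rcases hz with rfl | rfl <;> rcases hmaj g with h' | h'
    exacts [h'.symm, (hxy'.trans h').symm, (hxy'.symm.trans h').symm, h'.symm]
  by_cases hxB : x ∈ (G.blobOf m).verts
  · exact key y (Or.inr rfl) fun hyB => hxy (hx y (Conn.symm hxB |>.trans hyB)).symm
  · exact key x (Or.inl rfl) hxB

theorem bQuartetIn_of_not_cutSep {X : Type} {leaf : X → G.V} (hG : G.Connected)
    (hinj : Function.Injective leaf) (hleaf : ∀ x w, G.Conn G.cycleEdges (leaf x) w → w = leaf x)
    {a b c d : X} (h₁ : ¬ CutSep (top G) leaf a b c d) (h₂ : ¬ CutSep (top G) leaf a c b d)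
    (h₃ : ¬ CutSep (top G) leaf a d b c) : BQuartetIn (top G) leaf a b c d := by
  have : Nonempty G.V := ⟨leaf a⟩
  obtain ⟨m, hm⟩ := exists_forall_onMajoritySide hG (l := [leaf a, leaf b, leaf c, leaf d])
    (by simp) fun e => exists_onMajoritySide hG e (h₁ ∘ cutSep_top_of_splits hG)
      (h₂ ∘ cutSep_top_of_splits hG) (h₃ ∘ cutSep_top_of_splits hG)
  refine ⟨G.blobOf m, isBlobIn_blobOf m, fun s hs t ht hst => ?_⟩
  refine not_conn_of_forall_sameSide_or hG (hleaf s) (hinj.ne hst) (fun e => ?_) fun e he => he.2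
  have : Std.Symm fun x y => G.SameSide e x m ∨ G.SameSide e y m := ⟨fun _ _ => Or.symm⟩
  have hmem : ∀ x ∈ ({a, b, c, d} : Set X), leaf x ∈ [leaf a, leaf b, leaf c, leaf d] := by
    rintro x (rfl | rfl | rfl | rfl) <;> simp
  exact (hm e).forall (hmem s hs) (hmem t ht) (hinj.ne hst)

end MDigraph

theorem PhyloNetwork.eq_of_conn_cycleEdges_leaf {X : Type} (N : PhyloNetwork X) (x : X)
    (w : N.V) (h : N.Conn N.cycleEdges (N.leaf x) w) : w = N.leaf x := by
  refine eq_of_conn_cycleEdges (fun e he => ?_) (fun e f he hf => ?_) h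
  · exact (Finite.card_eq_zero_iff.1 (N.leaf_out x)).false ⟨e, he⟩
  · exact congrArg Subtype.val
      ((Nat.card_eq_one_iff_unique.1 (N.leaf_in x)).1.elim ⟨e, he⟩ ⟨f, hf⟩)

theorem stmt_11_general {X : Type} (N : PhyloNetwork X) (a b c d : X)
    (hT : ¬ BQuartetIn (top N.toMDigraph) N.leaf a b c d) :
    CutSep (top N.toMDigraph) N.leaf a b c d ∨
    CutSep (top N.toMDigraph) N.leaf a c b d ∨
    CutSep (top N.toMDigraph) N.leaf a d b c := by
  by_contra! hnone
  exact hT (bQuartetIn_of_not_cutSep N.conn N.leaf_inj N.eq_of_conn_cycleEdges_leaf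
    hnone.1 hnone.2.1 hnone.2.2)

/-- Let `N⁺` be a rooted binary phylogenetic network on taxon set `X` with
`|X| ≥ 4`, and let `{a,b,c,d} ⊆ X` be four distinct taxa not forming a
B-quartet on `N⁺`.  Then there is an edge of the tree of blobs of `N⁻` —
equivalently a cut edge of the network — whose deletion disconnects exactly
two of the taxa `a,b,c,d` from the other two; consequently the reduced
unrooted tree of blobs `T_rd(N⁻)` displays a resolved quartet tree on
`{a,b,c,d}` (one of `ab|cd`, `ac|bd`, `ad|bc`). -/
theorem stmt_11 {X : Type} (N : PhyloNetwork X) (a b c d : X)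
    (hpair : List.Pairwise (· ≠ ·) [a, b, c, d])
    (hT : ¬ BQuartetIn (top N.toMDigraph) N.leaf a b c d) :
    CutSep (top N.toMDigraph) N.leaf a b c d ∨
    CutSep (top N.toMDigraph) N.leaf a c b d ∨
    CutSep (top N.toMDigraph) N.leaf a d b c :=
  stmt_11_general N a b c d hT
end
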